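/- arXiv:2601.13086 — 2 statements merged into one kernel-verified Lean document; each statement's English description precedes it below -/
import Mathlib

section
/- Let ι be a type, let ℓ : ι → ℝ be a family of reals with ℓ i ≥ c for all i, for some constant c > 0, let s > 0 be real, and suppose the family i ↦ exp(−s·ℓ i) is summable. Then the double family (i,m) ∈ ι × ℕ≥1 ↦ (1/m)·(e^{s m ℓ_i} − e^{(s−1) m ℓ_i})⁻¹ is summable, and ∑_{i} ∑_{m=1}^∞ (1/m) · 1/(e^{s m ℓ_i} − e^{(s−1) m ℓ_i}) = −log ∏_{i} ∏_{k=0}^∞ (1 − e^{−(s+k)ℓ_i}). -/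
/-!
Expanding each factor as `-log (1 - e^{-(s+k)ℓ}) = ∑_{m ≥ 1} e^{-(s+k)mℓ} / m` turns `-log Z(s)`
into a sum over `(i, m, k)`; summing the same triple family over `k` first gives geometric series with
sum `(1/m) (e^{smℓ} - e^{(s-1)mℓ})⁻¹`. The triple family is dominated by
`e^{-sℓ_i} · e^{-sc(m-1)} · e^{-ck}`, which is summable, so both orders of summation agree.
-/

open Real

section Fubini

variable {α β γ : Type*}

theorem Summable.hasSum_tsum_fiberwise_right {a : α × β × γ → ℝ} (ha : Summable a)
    {F : α × β → ℝ} (hF : ∀ i j, HasSum (fun k => a (i, j, k)) (F (i, j))) :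
    HasSum F (∑' p, a p) := by
  rw [← (Equiv.prodAssoc α β γ).tsum_eq]
  exact ((Equiv.prodAssoc α β γ).summable_iff.mpr ha).hasSum.prod_fiberwise fun p => hF p.1 p.2

theorem Summable.hasSum_tsum_fiberwise_middle {a : α × β × γ → ℝ} (ha : Summable a)
    {G : α × γ → ℝ} (hG : ∀ i k, HasSum (fun j => a (i, j, k)) (G (i, k))) :
    HasSum G (∑' p, a p) := by
  let e : α × γ × β ≃ α × β × γ := (Equiv.refl α).prodCongr (Equiv.prodComm γ β)
  rw [← e.tsum_eq]
  exact (e.summable_iff.mpr ha).hasSum_tsum_fiberwise_right hG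

theorem tprod_tprod_eq_exp_of_hasSum_log {f : α × β → ℝ} (hf : ∀ p, 0 < f p) {T : ℝ}
    (h : HasSum (fun p => log (f p)) T) : ∏' i, ∏' j, f (i, j) = exp T := by
  have hexp (p) : exp (log (f p)) = f p := exp_log (hf p)
  have hrow (i : α) : HasSum (fun j => log (f (i, j))) (∑' j, log (f (i, j))) :=
    (h.summable.prod_factor i).hasSum
  calc ∏' i, ∏' j, f (i, j) = ∏' i, exp (∑' j, log (f (i, j))) :=
        tprod_congr fun i => by simpa [Function.comp_def, hexp] using (hrow i).rexp.tprod_eq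
    _ = exp T := (h.prod_fiberwise hrow).rexp.tprod_eq

end Fubini

theorem hasSum_pnat_pow_div_log_of_abs_lt_one {x : ℝ} (hx : |x| < 1) :
    HasSum (fun m : ℕ+ => x ^ (m : ℕ) / m) (-log (1 - x)) := by
  rw [← Equiv.pnatEquivNat.symm.hasSum_iff]
  simpa [Function.comp_def] using Real.hasSum_pow_div_log_of_abs_lt_one hx

theorem hasSum_exp_neg_add_nat_mul (s : ℝ) {t : ℝ} (ht : 0 < t) :
    HasSum (fun k : ℕ => exp (-(s + k) * t)) (exp (s * t) - exp ((s - 1) * t))⁻¹ := by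
  have hq : exp (-t) < 1 := exp_lt_one_iff.mpr (neg_lt_zero.mpr ht)
  have hterm : (fun k : ℕ => exp (-(s + k) * t)) = fun k => exp (-(s * t)) * exp (-t) ^ k := by
    ext k
    rw [← exp_nat_mul, ← exp_add]
    ring_nf
  have hsum : (exp (s * t) - exp ((s - 1) * t))⁻¹ = exp (-(s * t)) * (1 - exp (-t))⁻¹ := by
    rw [show (s - 1) * t = s * t + -t by ring, exp_add, ← mul_one_sub, mul_inv, ← exp_neg]
  rw [hterm, hsum]
  exact (hasSum_geometric_of_lt_one (exp_nonneg _) hq).mul_left _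

theorem hasSum_exp_neg_add_nat_mul_pow_div (s : ℝ) {ℓ : ℝ} (hℓ : 0 < ℓ) (m : ℕ+) :
    HasSum (fun k : ℕ => exp (-(s + k) * ℓ) ^ (m : ℕ) / m)
      ((1 / (m : ℝ)) * (exp (s * m * ℓ) - exp ((s - 1) * m * ℓ))⁻¹) := by
  have hmℓ : 0 < (m : ℝ) * ℓ := mul_pos (by exact_mod_cast m.pos) hℓ
  have hterm (k : ℕ) :
      exp (-(s + k) * ℓ) ^ (m : ℕ) / m = 1 / m * exp (-(s + k) * (m * ℓ)) := by
    rw [← exp_nat_mul]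
    ring_nf
  rw [mul_assoc s, mul_assoc (s - 1)]
  simp only [hterm]
  exact (hasSum_exp_neg_add_nat_mul s hmℓ).mul_left _

theorem summable_exp_neg_add_mul_pow_div {ι : Type*} {ℓ : ι → ℝ} {c s : ℝ} (hc : 0 < c)
    (hℓ : ∀ i, c ≤ ℓ i) (hs : 0 < s) (hsum : Summable fun i => exp (-s * ℓ i)) :
    Summable fun p : ι × ℕ+ × ℕ => exp (-(s + p.2.2) * ℓ p.1) ^ (p.2.1 : ℕ) / p.2.1 := by
  have hpow (r : ℝ) (n : ℕ) : 0 ≤ exp r ^ n := pow_nonneg (exp_nonneg r) n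
  have hgeom {r : ℝ} (hr : 0 < r) : Summable fun n : ℕ => exp (-r) ^ n :=
    summable_geometric_of_lt_one (exp_nonneg _) (exp_lt_one_iff.mpr (neg_lt_zero.mpr hr))
  have hmk : Summable fun q : ℕ+ × ℕ => exp (-(s * c)) ^ q.1.natPred * exp (-c) ^ q.2 :=
    ((hgeom (mul_pos hs hc)).comp_injective PNat.natPred_injective).mul_of_nonneg (hgeom hc)
      (fun _ => hpow _ _) fun _ => hpow _ _
  have hdom : Summable fun p : ι × ℕ+ × ℕ =>
      exp (-s * ℓ p.1) * (exp (-(s * c)) ^ p.2.1.natPred * exp (-c) ^ p.2.2) :=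
    hsum.mul_of_nonneg hmk (fun _ => exp_nonneg _) fun _ => mul_nonneg (hpow _ _) (hpow _ _)
  refine hdom.of_nonneg_of_le (fun _ => by positivity) fun ⟨i, m, k⟩ => ?_
  have hk : (k : ℝ) * c ≤ k * ℓ i := mul_le_mul_of_nonneg_left (hℓ i) k.cast_nonneg
  have hsc : s * c ≤ s * ℓ i := mul_le_mul_of_nonneg_left (hℓ i) hs.le
  have hx₁ : exp (-(s + k) * ℓ i) ≤ exp (-(s * c)) := exp_le_exp.mpr (by nlinarith)
  have hx₂ : exp (-(s + k) * ℓ i) ≤ exp (-s * ℓ i) * exp (-c) ^ k := by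
    rw [← exp_nat_mul, ← exp_add, exp_le_exp]
    nlinarith
  calc exp (-(s + k) * ℓ i) ^ (m : ℕ) / m ≤ exp (-(s + k) * ℓ i) ^ (m : ℕ) :=
        div_le_self (by positivity) (Nat.one_le_cast.mpr m.pos)
    _ = exp (-(s + k) * ℓ i) ^ m.natPred * exp (-(s + k) * ℓ i) := by
        rw [← pow_succ, PNat.natPred_add_one]
    _ ≤ exp (-(s * c)) ^ m.natPred * (exp (-s * ℓ i) * exp (-c) ^ k) := by gcongr
    _ = _ := by ring

/-- The analytic core of Theorem 1.1: summability of the double family and the identity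
`∑_i ∑_{m ≥ 1} (1/m)/(e^{s m ℓ_i} - e^{(s-1) m ℓ_i}) = -log ∏_i ∏_k (1 - e^{-(s+k) ℓ_i})`. -/
theorem stmt2 {ι : Type*} (ℓ : ι → ℝ) (c : ℝ) (hc : 0 < c) (hℓ : ∀ i, c ≤ ℓ i)
    (s : ℝ) (hs : 0 < s) (hsum : Summable fun i => Real.exp (-s * ℓ i)) :
    Summable (fun p : ι × ℕ+ =>
      (1 / (p.2 : ℝ)) * (Real.exp (s * p.2 * ℓ p.1) - Real.exp ((s - 1) * p.2 * ℓ p.1))⁻¹) ∧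
    (∑' i, ∑' m : ℕ+,
        (1 / (m : ℝ)) * (Real.exp (s * m * ℓ i) - Real.exp ((s - 1) * m * ℓ i))⁻¹) =
      -Real.log (∏' i, ∏' k : ℕ, (1 - Real.exp (-(s + k) * ℓ i))) := by
  have hℓpos (i : ι) : 0 < ℓ i := hc.trans_le (hℓ i)
  have hx (i : ι) (k : ℕ) : |exp (-(s + k) * ℓ i)| < 1 := by
    rw [abs_of_pos (exp_pos _), exp_lt_one_iff, neg_mul, neg_lt_zero]
    exact mul_pos (by positivity) (hℓpos i)
  have hterms := summable_exp_neg_add_mul_pow_div hc hℓ hs hsum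
  have hlhs := hterms.hasSum_tsum_fiberwise_right
    (F := fun p => (1 / (p.2 : ℝ)) * (exp (s * p.2 * ℓ p.1) - exp ((s - 1) * p.2 * ℓ p.1))⁻¹)
    fun i m => hasSum_exp_neg_add_nat_mul_pow_div s (hℓpos i) m
  have hrhs := hterms.hasSum_tsum_fiberwise_middle
    (G := fun p => -log (1 - exp (-(s + p.2) * ℓ p.1)))
    fun i k => hasSum_pnat_pow_div_log_of_abs_lt_one (hx i k)
  have hprod := tprod_tprod_eq_exp_of_hasSum_log
    (fun p => sub_pos.mpr (lt_of_abs_lt (hx p.1 p.2))) (by simpa only [neg_neg] using hrhs.neg)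
  refine ⟨hlhs.summable, ?_⟩
  rw [hprod, log_exp, neg_neg, ← hlhs.tsum_eq, hlhs.summable.tsum_prod]
end

section
/- Let t > 0, ℓ > 0 and a > 0 be reals. Define p(t, d) = (√2·e^{−t/4}/(4πt)^{3/2}) · ∫_d^∞ r·e^{−r²/(4t)}·(cosh r − cosh d)^{−1/2} dr for d > 0. Then ∫_{x ∈ ℝ} ∫_{y = 1}^{e^{a}} p(t, dist(x + iy, e^ℓ x + i e^ℓ y)) · y^{−2} dy dx = (e^{−t/4}/√(4πt)) · a · e^{−ℓ²/(4t)} / (2·sinh(ℓ/2)), where dist denotes the hyperbolic distance on the upper half-plane ℍ = {x + iy : y > 0} with metric (dx² + dy²)/y². -/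
open Real MeasureTheory

/-- The heat kernel of the hyperbolic plane at time `t` between two points at hyperbolic
distance `d` (for Brownian motion run at speed 2). -/
noncomputable def heatKernelH (t d : ℝ) : ℝ :=
  Real.sqrt 2 * Real.exp (-t / 4) / (4 * π * t) ^ ((3 : ℝ) / 2) *
    ∫ r in Set.Ioi d, r * Real.exp (-r ^ 2 / (4 * t)) / Real.sqrt (Real.cosh r - Real.cosh d)

open Set Filter Topology

/-! Along the orbit of `z ↦ e^ℓ z` one has `cosh d(z, e^ℓ z) = cosh ℓ + 2 sinh²(ℓ/2) (x/y)²`,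
so the integrand depends on `u = x/y` only, and integrating `dx dy / y²` over the strip gives
`a · ∫ K(u) du` with `K = orbitProfile t ℓ`. After exchanging the `u`- and `r`-integrals in
`∫ K`, the inner integral is the arcsine integral `∫ du / √(A - B u²) = π / √B`, supported on
`r > ℓ`, and what remains is the Gaussian integral `∫_ℓ^∞ r e^{-r²/4t} dr = 2t e^{-ℓ²/4t}`. -/

lemma one_div_sqrt_one_sub_sq_eq_zero {u : ℝ} (hu : u ∉ Ioo (-1) 1) : 1 / √(1 - u ^ 2) = 0 := by
  have : 1 ≤ u ^ 2 := by
    rw [mem_Ioo, not_and_or, not_lt, not_lt] at hu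
    rcases hu with hu | hu <;> nlinarith
  rw [sqrt_eq_zero'.2 (by linarith), div_zero]

lemma integrableOn_one_div_sqrt_one_sub_sq :
    IntegrableOn (fun u : ℝ => 1 / √(1 - u ^ 2)) (Ioo (-1) 1) :=
  (integrableOn_Ioc_iff_integrableOn_Ioo (by simp)).1 <|
    intervalIntegral.integrableOn_deriv_of_nonneg continuous_arcsin.continuousOn
      (fun _ hx => hasDerivAt_arcsin hx.1.ne' hx.2.ne) (fun _ _ => by positivity)

lemma integrable_one_div_sqrt_one_sub_sq : Integrable (fun u : ℝ => 1 / √(1 - u ^ 2)) :=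
  (integrableOn_iff_integrable_of_support_subset fun _ hu =>
    not_not.1 (mt one_div_sqrt_one_sub_sq_eq_zero hu)).1 integrableOn_one_div_sqrt_one_sub_sq

lemma integral_one_div_sqrt_one_sub_sq : ∫ u : ℝ, 1 / √(1 - u ^ 2) = π := by
  rw [← setIntegral_eq_integral_of_forall_compl_eq_zero fun _ hu =>
      one_div_sqrt_one_sub_sq_eq_zero hu,
    ← integral_Ioc_eq_integral_Ioo, ← intervalIntegral.integral_of_le (by norm_num),
    intervalIntegral.integral_eq_sub_of_hasDeriv_right_of_le (by norm_num)
      continuous_arcsin.continuousOn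
      (fun _ hx => (hasDerivAt_arcsin hx.1.ne' hx.2.ne).hasDerivWithinAt)
      ((intervalIntegrable_iff_integrableOn_Ioo_of_le (by norm_num)).2
        integrableOn_one_div_sqrt_one_sub_sq),
    arcsin_one, arcsin_neg_one]
  ring

section ScaledArcsine

variable {A B : ℝ}

lemma one_div_sqrt_sub_mul_sq_eq (hA : 0 < A) (hB : 0 < B) (u : ℝ) :
    1 / √(A - B * u ^ 2) = (√A)⁻¹ * (1 / √(1 - (u / √(A / B)) ^ 2)) := by
  have : A - B * u ^ 2 = A * (1 - (u / √(A / B)) ^ 2) := by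
    rw [div_pow, sq_sqrt (div_pos hA hB).le]
    field_simp
  rw [this, sqrt_mul hA.le, one_div, one_div, mul_inv]

lemma one_div_sqrt_sub_mul_sq_of_nonpos (hA : A ≤ 0) (hB : 0 < B) (u : ℝ) :
    1 / √(A - B * u ^ 2) = 0 := by
  rw [sqrt_eq_zero'.2 (by nlinarith [sq_nonneg u]), div_zero]

lemma integrable_one_div_sqrt_sub_mul_sq (hB : 0 < B) (A : ℝ) :
    Integrable (fun u : ℝ => 1 / √(A - B * u ^ 2)) := by
  rcases lt_or_ge 0 A with hA | hA
  · simp only [one_div_sqrt_sub_mul_sq_eq hA hB]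
    exact (integrable_one_div_sqrt_one_sub_sq.comp_div
      (sqrt_pos.2 (div_pos hA hB)).ne').const_mul _
  · simp only [one_div_sqrt_sub_mul_sq_of_nonpos hA hB]
    exact integrable_zero _ _ _

lemma integral_one_div_sqrt_sub_mul_sq (hB : 0 < B) (A : ℝ) :
    ∫ u : ℝ, 1 / √(A - B * u ^ 2) = if 0 < A then π / √B else 0 := by
  split_ifs with hA
  · simp only [one_div_sqrt_sub_mul_sq_eq hA hB]
    rw [integral_const_mul, Measure.integral_comp_div (fun u : ℝ => 1 / √(1 - u ^ 2)),
      integral_one_div_sqrt_one_sub_sq, abs_of_pos (sqrt_pos.2 (div_pos hA hB)),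
      sqrt_div hA.le, smul_eq_mul]
    have : √A ≠ 0 := (sqrt_pos.2 hA).ne'
    field_simp
  · simp [one_div_sqrt_sub_mul_sq_of_nonpos (not_lt.1 hA) hB]

lemma integral_div_sqrt_sub_mul_sq (hB : 0 < B) (c A : ℝ) :
    ∫ u : ℝ, c / √(A - B * u ^ 2) = if 0 < A then π / √B * c else 0 := by
  simp only [← mul_one_div c]
  rw [integral_const_mul, integral_one_div_sqrt_sub_mul_sq hB]
  split_ifs <;> ring

end ScaledArcsine

section AbelTransform

variable {α : Type*} [MeasurableSpace α] {μ : Measure α} [SFinite μ] {φ h : α → ℝ} {B : ℝ}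

lemma integrable_div_sqrt_sub_mul_sq_prod (hφ : Integrable φ μ) (hh : Measurable h)
    (hB : 0 < B) :
    Integrable (fun p : ℝ × α => φ p.2 / √(h p.2 - B * p.1 ^ 2)) (volume.prod μ) := by
  have hmeas : AEStronglyMeasurable (fun p : ℝ × α => φ p.2 / √(h p.2 - B * p.1 ^ 2))
      (volume.prod μ) :=
    (hφ.1.comp_quasiMeasurePreserving Measure.quasiMeasurePreserving_snd).div₀
      (by fun_prop : Measurable fun p : ℝ × α => √(h p.2 - B * p.1 ^ 2)).aestronglyMeasurable
  refine (integrable_prod_iff' hmeas).2 ⟨ae_of_all _ fun r => ?_, ?_⟩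
  · simpa only [mul_one_div] using
      (integrable_one_div_sqrt_sub_mul_sq hB (h r)).const_mul (φ r)
  · have h_norm (r : α) : ∫ u : ℝ, ‖φ r / √(h r - B * u ^ 2)‖ =
        {r | 0 < h r}.indicator (fun r => π / √B * ‖φ r‖) r := by
      simp only [norm_div, norm_of_nonneg (sqrt_nonneg _), integral_div_sqrt_sub_mul_sq hB]
      simp [indicator_apply]
    simp only [h_norm]
    exact (hφ.norm.const_mul _).indicator (measurableSet_lt measurable_const hh)

lemma integrable_integral_div_sqrt_sub_mul_sq (hφ : Integrable φ μ) (hh : Measurable h)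
    (hB : 0 < B) : Integrable (fun u : ℝ => ∫ r, φ r / √(h r - B * u ^ 2) ∂μ) :=
  (integrable_div_sqrt_sub_mul_sq_prod hφ hh hB).integral_prod_left

lemma integral_integral_div_sqrt_sub_mul_sq (hφ : Integrable φ μ) (hh : Measurable h)
    (hB : 0 < B) :
    ∫ u : ℝ, ∫ r, φ r / √(h r - B * u ^ 2) ∂μ = π / √B * ∫ r in {r | 0 < h r}, φ r ∂μ := by
  rw [integral_integral_swap (f := fun u r => φ r / √(h r - B * u ^ 2))
      (integrable_div_sqrt_sub_mul_sq_prod hφ hh hB),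
    ← integral_const_mul, ← integral_indicator (measurableSet_lt measurable_const hh)]
  refine integral_congr_ae (ae_of_all _ fun r => ?_)
  simp [integral_div_sqrt_sub_mul_sq hB, indicator_apply]

lemma measurable_integral_div_sqrt_sub_mul_sq (hφ : Measurable φ) (hh : Measurable h) :
    Measurable (fun u : ℝ => ∫ r, φ r / √(h r - B * u ^ 2) ∂μ) :=
  (show Measurable fun p : ℝ × α => φ p.2 / √(h p.2 - B * p.1 ^ 2) by fun_prop)
    |>.stronglyMeasurable.integral_prod_right'.measurable

end AbelTransform

lemma integrable_mul_exp_neg_sq_div {c : ℝ} (hc : 0 < c) :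
    Integrable (fun r : ℝ => r * exp (-r ^ 2 / c)) :=
  (integrable_mul_exp_neg_mul_sq (inv_pos.2 hc)).congr <| ae_of_all _ fun r => by
    simp only [neg_mul, inv_mul_eq_div, neg_div]

lemma integral_Ioi_mul_exp_neg_sq_div {c : ℝ} (hc : 0 < c) (b : ℝ) :
    ∫ r in Ioi b, r * exp (-r ^ 2 / c) = c / 2 * exp (-b ^ 2 / c) := by
  have h_deriv (r : ℝ) :
      HasDerivAt (fun r => -(c / 2) * exp (-r ^ 2 / c)) (r * exp (-r ^ 2 / c)) r :=
    (((hasDerivAt_pow 2 r).neg.div_const c).exp.const_mul (-(c / 2))).congr_deriv (by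
      simp only [Pi.neg_apply]
      field_simp
      ring)
  have h_lim : Tendsto (fun r => -(c / 2) * exp (-r ^ 2 / c)) atTop (𝓝 0) := by
    have : Tendsto (fun r : ℝ => -r ^ 2 / c) atTop atBot := by
      simpa only [neg_div, Function.comp_def] using
        tendsto_neg_atTop_atBot.comp ((tendsto_pow_atTop two_ne_zero).atTop_div_const hc)
    simpa using (tendsto_exp_atBot.comp this).const_mul (-(c / 2))
  rw [integral_Ioi_of_hasDerivAt_of_tendsto' (fun r _ => h_deriv r)
    (integrable_mul_exp_neg_sq_div hc).integrableOn h_lim]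
  ring

lemma integral_integral_comp_div_div_sq {F : ℝ → ℝ} (hFm : Measurable F) (hF : Integrable F)
    {b c : ℝ} (hb : 0 < b) (hbc : b ≤ c) :
    ∫ x, ∫ y in Ioo b c, F (x / y) / y ^ 2 = log (c / b) * ∫ u, F u := by
  have h_inner (G : ℝ → ℝ) {y : ℝ} (hy : 0 < y) : ∫ x, G (x / y) / y ^ 2 = (∫ u, G u) / y := by
    rw [integral_div, Measure.integral_comp_div, smul_eq_mul, abs_of_pos hy]
    field_simp
  have h_int : Integrable (fun p : ℝ × ℝ => F (p.1 / p.2) / p.2 ^ 2)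
      (volume.prod (volume.restrict (Ioo b c))) := by
    refine (integrable_prod_iff' (by fun_prop : Measurable fun p : ℝ × ℝ =>
      F (p.1 / p.2) / p.2 ^ 2).aestronglyMeasurable).2 ⟨?_, ?_⟩
    · filter_upwards [ae_restrict_mem measurableSet_Ioo] with y hy
      exact (hF.comp_div (hb.trans hy.1).ne').div_const _
    · have : IntegrableOn (fun y => (∫ u, ‖F u‖) / y) (Ioo b c) :=
        (continuousOn_const.div continuousOn_id fun y hy => (hb.trans_le hy.1).ne')
          |>.integrableOn_Icc.mono_set Ioo_subset_Icc_self
      refine this.congr_fun (fun y hy => ?_) measurableSet_Ioo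
      simp only [norm_div, norm_of_nonneg (sq_nonneg _)]
      exact (h_inner (‖F ·‖) (hb.trans hy.1)).symm
  rw [integral_integral_swap h_int,
    setIntegral_congr_fun measurableSet_Ioo fun y hy => h_inner F (hb.trans hy.1)]
  simp only [div_eq_mul_inv (∫ u, F u)]
  rw [integral_const_mul, ← integral_Ioc_eq_integral_Ioo, ← intervalIntegral.integral_of_le hbc,
    integral_inv_of_pos hb (hb.trans_le hbc), mul_comm]

lemma cosh_dist_of_coe_eq_exp_mul {z w : UpperHalfPlane} {ℓ : ℝ} (hw : (w : ℂ) = exp ℓ * z) :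
    cosh (dist z w) = cosh ℓ + 2 * sinh (ℓ / 2) ^ 2 * (z.re / z.im) ^ 2 := by
  have h_re : w.re = exp ℓ * z.re := by
    rw [← UpperHalfPlane.coe_re, hw, Complex.re_ofReal_mul, UpperHalfPlane.coe_re]
  have h_im : w.im = exp ℓ * z.im := by
    rw [← UpperHalfPlane.coe_im, hw, Complex.im_ofReal_mul, UpperHalfPlane.coe_im]
  have h_sinh : 2 * sinh (ℓ / 2) ^ 2 = cosh ℓ - 1 := by
    have := cosh_two_mul (ℓ / 2)
    rw [mul_div_cancel₀ _ two_ne_zero, cosh_sq] at this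
    linarith
  rw [UpperHalfPlane.cosh_dist', h_re, h_im, h_sinh, cosh_eq, exp_neg]
  have := z.im_pos.ne'
  have := (exp_pos ℓ).ne'
  field_simp
  ring

lemma heatKernelH_eq_setIntegral_Ioi_zero {t d : ℝ} (hd : 0 ≤ d) :
    heatKernelH t d = √2 * exp (-t / 4) / (4 * π * t) ^ ((3 : ℝ) / 2) *
      ∫ r in Ioi 0, r * exp (-r ^ 2 / (4 * t)) / √(cosh r - cosh d) := by
  rw [heatKernelH, setIntegral_eq_of_subset_of_forall_sdiff_eq_zero measurableSet_Ioi
    (Ioi_subset_Ioi hd) fun r ⟨hr, hrd⟩ => ?_]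
  have : cosh r ≤ cosh d := by
    rw [cosh_le_cosh, abs_of_pos hr, abs_of_nonneg hd]
    exact not_lt.1 hrd
  rw [sqrt_eq_zero'.2 (by linarith), div_zero]

noncomputable def orbitProfile (t ℓ u : ℝ) : ℝ :=
  ∫ r in Ioi 0, r * exp (-r ^ 2 / (4 * t)) / √(cosh r - cosh ℓ - 2 * sinh (ℓ / 2) ^ 2 * u ^ 2)

lemma heatKernelH_dist_of_coe_eq_exp_mul (t : ℝ) {z w : UpperHalfPlane} {ℓ : ℝ}
    (hw : (w : ℂ) = exp ℓ * z) :
    heatKernelH t (dist z w) = √2 * exp (-t / 4) / (4 * π * t) ^ ((3 : ℝ) / 2) *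
      orbitProfile t ℓ (z.re / z.im) := by
  rw [heatKernelH_eq_setIntegral_Ioi_zero dist_nonneg, cosh_dist_of_coe_eq_exp_mul hw,
    orbitProfile]
  simp only [sub_add_eq_sub_sub]

lemma measurable_orbitProfile (t ℓ : ℝ) : Measurable (orbitProfile t ℓ) :=
  measurable_integral_div_sqrt_sub_mul_sq (by fun_prop) (by fun_prop)

lemma integrable_orbitProfile {t ℓ : ℝ} (ht : 0 < t) (hℓ : ℓ ≠ 0) :
    Integrable (orbitProfile t ℓ) :=
  integrable_integral_div_sqrt_sub_mul_sq (integrable_mul_exp_neg_sq_div (by positivity)).restrict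
    (by fun_prop) (by have := sinh_ne_zero.2 (div_ne_zero hℓ two_ne_zero); positivity)

lemma integral_orbitProfile {t ℓ : ℝ} (ht : 0 < t) (hℓ : 0 < ℓ) :
    ∫ u, orbitProfile t ℓ u = 2 * π * t * exp (-ℓ ^ 2 / (4 * t)) / (√2 * sinh (ℓ / 2)) := by
  have hs : 0 < sinh (ℓ / 2) := sinh_pos_iff.2 (half_pos hℓ)
  have h_set : {r | 0 < cosh r - cosh ℓ} ∩ Ioi 0 = Ioi ℓ := by
    ext r
    simp only [mem_inter_iff, mem_ofPred_eq, mem_Ioi, sub_pos, cosh_lt_cosh, abs_of_pos hℓ]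
    constructor
    · rintro ⟨h, hr⟩
      rwa [abs_of_pos hr] at h
    · intro h
      have hr := hℓ.trans h
      exact ⟨by rwa [abs_of_pos hr], hr⟩
  unfold orbitProfile
  rw [integral_integral_div_sqrt_sub_mul_sq
      (integrable_mul_exp_neg_sq_div (by positivity)).restrict (by fun_prop) (by positivity),
    Measure.restrict_restrict (measurableSet_lt (by fun_prop) (by fun_prop)), h_set,
    integral_Ioi_mul_exp_neg_sq_div (by positivity), sqrt_mul zero_le_two, sqrt_sq hs.le]
  field_simp
  ring

/-- Integrating the hyperbolic heat kernel between `z = x + iy` and `e^ℓ z` over the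
fundamental strip `{1 ≤ y < e^a}` against the hyperbolic area measure `dx dy / y²`:
the result is `(e^{-t/4}/√(4πt)) · a · e^{-ℓ²/(4t)} / (2 sinh(ℓ/2))`.
Here `d` is the hyperbolic distance of the upper half-plane. -/
theorem stmt6 (t ℓ a : ℝ) (ht : 0 < t) (hℓ : 0 < ℓ) (ha : 0 < a)
    (d : ℂ → ℂ → ℝ) (hd : ∀ z w : UpperHalfPlane, d (z : ℂ) (w : ℂ) = dist z w) :
    (∫ x : ℝ, ∫ y in Set.Ioo (1 : ℝ) (Real.exp a),
        heatKernelH t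
          (d ((x : ℂ) + (y : ℂ) * Complex.I)
            ((Real.exp ℓ * x : ℝ) + ((Real.exp ℓ * y : ℝ) : ℂ) * Complex.I)) / y ^ 2) =
      Real.exp (-t / 4) / Real.sqrt (4 * π * t) * a * Real.exp (-ℓ ^ 2 / (4 * t)) /
        (2 * Real.sinh (ℓ / 2)) := by
  set C := √2 * exp (-t / 4) / (4 * π * t) ^ ((3 : ℝ) / 2) with hC
  have h_orbit (x : ℝ) : ∀ y ∈ Ioo (1 : ℝ) (exp a),
      heatKernelH t (d ((x : ℂ) + (y : ℂ) * Complex.I)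
        ((exp ℓ * x : ℝ) + ((exp ℓ * y : ℝ) : ℂ) * Complex.I)) / y ^ 2 =
      C * orbitProfile t ℓ (x / y) / y ^ 2 := by
    intro y hy
    have hy0 : 0 < y := one_pos.trans hy.1
    have h_dist := hd ⟨(x : ℂ) + (y : ℂ) * Complex.I, by simpa using hy0⟩
      ⟨(exp ℓ * x : ℝ) + ((exp ℓ * y : ℝ) : ℂ) * Complex.I,
        by simpa [Complex.exp_ofReal_re] using mul_pos (exp_pos ℓ) hy0⟩
    rw [UpperHalfPlane.coe_mk, UpperHalfPlane.coe_mk] at h_dist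
    rw [h_dist, heatKernelH_dist_of_coe_eq_exp_mul t (by push_cast; ring)]
    simp [UpperHalfPlane.re, UpperHalfPlane.im, hC]
  have h_pow : (4 * π * t) ^ ((3 : ℝ) / 2) = 4 * π * t * √(4 * π * t) := by
    rw [sqrt_eq_rpow, ← rpow_one_add' (by positivity) (by norm_num)]
    norm_num
  rw [integral_congr_ae <| ae_of_all _ fun x => setIntegral_congr_fun measurableSet_Ioo (h_orbit x),
    integral_integral_comp_div_div_sq ((measurable_orbitProfile t ℓ).const_mul C)
      ((integrable_orbitProfile ht hℓ.ne').const_mul C) one_pos (one_le_exp ha.le),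
    integral_const_mul, integral_orbitProfile ht hℓ, div_one, log_exp, hC, h_pow]
  have := (sinh_pos_iff.2 (half_pos hℓ)).ne'
  field_simp
  ring
end
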